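/- arXiv:1512.05515 — 6 statements merged into one kernel-verified Lean document; each statement's English description precedes it below -/
import Mathlib

section
/- Let ∇ be the torsion-free connection on ℝ² whose Christoffel symbols Γ_{ij}^k (1 ≤ i,j,k ≤ 2, with Γ_{ij}^k = Γ_{ji}^k) are real constants, and let ρ_{jk} = Σ_{i,p} (Γ_{ip}^i Γ_{jk}^p − Γ_{jp}^i Γ_{ik}^p) be its Ricci tensor. Then ρ is symmetric, with ρ₁₁ = (Γ₁₁¹ − Γ₁₂²)Γ₁₂² + Γ₁₁²(Γ₂₂² − Γ₁₂¹), ρ₁₂ = ρ₂₁ = Γ₁₂¹Γ₁₂² − Γ₁₁²Γ₂₂¹, and ρ₂₂ = −(Γ₁₂¹)² + Γ₂₂²Γ₁₂¹ + (Γ₁₁¹ − Γ₁₂²)Γ₂₂¹; moreover the covariant derivative ∇ρ, whose components are ρ_{jk;i} = −Σ_l (Γ_{ij}^l ρ_{lk} + Γ_{ik}^l ρ_{jl}), is totally symmetric in the three indices (i,j,k). -/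
/-! A Type A connection in any dimension has symmetric Ricci tensor, because the quadratic
term `Σ Γ_{jp}^i Γ_{ik}^p` is the trace of the product of the matrices `(Γ_{j·}^·)` and
`(Γ_{k·}^·)`. Given that, `∇ρ` is symmetric in its last two indices, and symmetry in the first
two reduces to the identity `Σ_l Γ_{ik}^l ρ_{jl} = Σ_l Γ_{jk}^l ρ_{il}`, a polynomial identity
that holds in dimension two. -/

noncomputable section

/-- Ricci tensor of the Type A connection on ℝ² with constant Christoffel symbols
`Γ i j k = Γ_{ij}^k`:  `ρ_{jk} = Σ_{i,p} (Γ_{ip}^i Γ_{jk}^p − Γ_{jp}^i Γ_{ik}^p)`. -/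
def ricciA (Γ : Fin 2 → Fin 2 → Fin 2 → ℝ) (j k : Fin 2) : ℝ :=
  ∑ i, ∑ q, (Γ i q i * Γ j k q - Γ j q i * Γ i k q)

/-- Components `ρ_{jk;i}` of the covariant derivative of the Ricci tensor; for constant
Christoffel symbols `ρ_{jk;i} = −Σ_l (Γ_{ij}^l ρ_{lk} + Γ_{ik}^l ρ_{jl})`. -/
def nablaRicciA (Γ : Fin 2 → Fin 2 → Fin 2 → ℝ) (i j k : Fin 2) : ℝ :=
  -∑ l, (Γ i j l * ricciA Γ l k + Γ i k l * ricciA Γ j l)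

namespace TypeA

section

variable {ι R : Type*} [Fintype ι] [CommRing R] (Γ : ι → ι → ι → R)

def ricci (j k : ι) : R :=
  ∑ i, ∑ q, (Γ i q i * Γ j k q - Γ j q i * Γ i k q)

def nablaRicci (i j k : ι) : R :=
  -∑ l, (Γ i j l * ricci Γ l k + Γ i k l * ricci Γ j l)

variable {Γ}

theorem ricci_comm (hΓ : ∀ i j k, Γ i j k = Γ j i k) (j k : ι) :
    ricci Γ j k = ricci Γ k j := by
  have htrace : ∑ i, ∑ q, Γ j q i * Γ i k q = ∑ i, ∑ q, Γ k q i * Γ i j q := by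
    conv_rhs => rw [Finset.sum_comm]
    refine Finset.sum_congr rfl fun i _ => Finset.sum_congr rfl fun q _ => ?_
    rw [hΓ j q, hΓ i k, mul_comm]
  simp only [ricci, Finset.sum_sub_distrib, hΓ j k, htrace]

theorem nablaRicci_right_comm (hρ : ∀ j k, ricci Γ j k = ricci Γ k j) (i j k : ι) :
    nablaRicci Γ i j k = nablaRicci Γ i k j := by
  simp only [nablaRicci, hρ _ k, hρ j, add_comm]

theorem nablaRicci_left_comm (hΓ : ∀ i j k, Γ i j k = Γ j i k) {i j k : ι}
    (hcod : ∑ l, Γ i k l * ricci Γ j l = ∑ l, Γ j k l * ricci Γ i l) :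
    nablaRicci Γ i j k = nablaRicci Γ j i k := by
  simp only [nablaRicci, Finset.sum_add_distrib, hΓ i j, hcod]

end

section FinTwo

variable {R : Type*} [CommRing R] {Γ : Fin 2 → Fin 2 → Fin 2 → R}

theorem ricci_zero_zero (hΓ : ∀ i j k, Γ i j k = Γ j i k) :
    ricci Γ 0 0 = (Γ 0 0 0 - Γ 0 1 1) * Γ 0 1 1 + Γ 0 0 1 * (Γ 1 1 1 - Γ 0 1 0) := by
  simp only [ricci, Fin.sum_univ_two, hΓ 1 0]
  ring

theorem ricci_zero_one (hΓ : ∀ i j k, Γ i j k = Γ j i k) :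
    ricci Γ 0 1 = Γ 0 1 0 * Γ 0 1 1 - Γ 0 0 1 * Γ 1 1 0 := by
  simp only [ricci, Fin.sum_univ_two, hΓ 1 0]
  ring

theorem ricci_one_one (hΓ : ∀ i j k, Γ i j k = Γ j i k) :
    ricci Γ 1 1 = -(Γ 0 1 0) ^ 2 + Γ 1 1 1 * Γ 0 1 0 + (Γ 0 0 0 - Γ 0 1 1) * Γ 1 1 0 := by
  simp only [ricci, Fin.sum_univ_two, hΓ 1 0]
  ring

theorem sum_mul_ricci_comm (hΓ : ∀ i j k, Γ i j k = Γ j i k) (i j k : Fin 2) :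
    ∑ l, Γ i k l * ricci Γ j l = ∑ l, Γ j k l * ricci Γ i l := by
  have hρ₁₀ : ricci Γ 1 0 = Γ 0 1 0 * Γ 0 1 1 - Γ 0 0 1 * Γ 1 1 0 :=
    (ricci_comm hΓ 1 0).trans (ricci_zero_one hΓ)
  revert i j k
  simp only [Fin.forall_fin_two, Fin.sum_univ_two, ricci_zero_zero hΓ, ricci_zero_one hΓ, hρ₁₀,
    ricci_one_one hΓ, hΓ 1 0]
  refine ⟨⟨⟨trivial, trivial⟩, ?_, ?_⟩, ⟨?_, ?_⟩, trivial, trivial⟩ <;> ring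

end FinTwo

end TypeA

/-- for a Type A connection the Ricci tensor is symmetric, with the stated
explicit components, and its covariant derivative is totally symmetric in `(i,j,k)`. -/
theorem stmt0 (Γ : Fin 2 → Fin 2 → Fin 2 → ℝ)
    (hΓ : ∀ i j k, Γ i j k = Γ j i k) :
    (∀ j k, ricciA Γ j k = ricciA Γ k j) ∧
    ricciA Γ 0 0 = (Γ 0 0 0 - Γ 0 1 1) * Γ 0 1 1 + Γ 0 0 1 * (Γ 1 1 1 - Γ 0 1 0) ∧
    ricciA Γ 0 1 = Γ 0 1 0 * Γ 0 1 1 - Γ 0 0 1 * Γ 1 1 0 ∧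
    ricciA Γ 1 0 = Γ 0 1 0 * Γ 0 1 1 - Γ 0 0 1 * Γ 1 1 0 ∧
    ricciA Γ 1 1 = -(Γ 0 1 0) ^ 2 + Γ 1 1 1 * Γ 0 1 0 + (Γ 0 0 0 - Γ 0 1 1) * Γ 1 1 0 ∧
    (∀ i j k, nablaRicciA Γ i j k = nablaRicciA Γ j i k ∧
      nablaRicciA Γ i j k = nablaRicciA Γ i k j) := by
  have hρ : ∀ j k, ricciA Γ j k = ricciA Γ k j := TypeA.ricci_comm hΓ
  have hρ₀₁ : ricciA Γ 0 1 = Γ 0 1 0 * Γ 0 1 1 - Γ 0 0 1 * Γ 1 1 0 := TypeA.ricci_zero_one hΓ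
  exact ⟨hρ, TypeA.ricci_zero_zero hΓ, hρ₀₁, (hρ 1 0).trans hρ₀₁, TypeA.ricci_one_one hΓ,
    fun i j k => ⟨TypeA.nablaRicci_left_comm hΓ (TypeA.sum_mul_ricci_comm hΓ i j k),
      TypeA.nablaRicci_right_comm hρ i j k⟩⟩
end
end

section
/- Let ∇ be a Type A connection on ℝ² (constant Christoffel symbols Γ_{ij}^k = Γ_{ji}^k) with Ricci tensor ρ not identically zero. Then the following conditions are equivalent: (1) ρ₁₁ = ρ₁₂ = ρ₂₁ = 0, i.e. ρ = ρ₂₂ dx²⊗dx²; (2) Γ₁₁² = 0 and Γ₁₂² = 0; (3) ρ₁₁ = ρ₁₂ = ρ₂₁ = 0 and ρ₂₂ = Γ₁₂¹(Γ₂₂² − Γ₁₂¹) + Γ₁₁¹Γ₂₂¹. -/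
/-! Write `b = Γ₁₁²` and `d = Γ₁₂²` (the indices `1, 2` are `0, 1` in Lean). The products
`b ρ₂₂` and `d ρ₂₂` are linear combinations of `ρ₁₁` and `ρ₁₂ = ρ₂₁`. So if `ρ₁₁ = ρ₁₂ = 0`
while `ρ ≠ 0`, then `ρ₂₂ ≠ 0` forces `b = d = 0`; conversely `b = d = 0` kills `ρ₁₁` and `ρ₁₂`
outright and leaves `ρ₂₂` in the stated form. -/

noncomputable section

section TypeA

variable {Γ : Fin 2 → Fin 2 → Fin 2 → ℝ}

theorem ricciA_comm (hΓ : ∀ i j k, Γ i j k = Γ j i k) (j k : Fin 2) :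
    ricciA Γ j k = ricciA Γ k j := by
  simp only [ricciA, Finset.sum_sub_distrib, hΓ j k]
  congr 1
  rw [Finset.sum_comm]
  refine Finset.sum_congr rfl fun i _ => Finset.sum_congr rfl fun q _ => ?_
  rw [hΓ k q, hΓ i j, mul_comm]

theorem ricciA_zero_zero (hΓ : ∀ i j k, Γ i j k = Γ j i k) :
    ricciA Γ 0 0 = Γ 0 0 0 * Γ 0 1 1 - Γ 0 0 1 * Γ 0 1 0 + Γ 0 0 1 * Γ 1 1 1 - Γ 0 1 1 ^ 2 := by
  simp only [ricciA, Fin.sum_univ_two, hΓ 1 0]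
  ring

theorem ricciA_zero_one (hΓ : ∀ i j k, Γ i j k = Γ j i k) :
    ricciA Γ 0 1 = Γ 0 1 0 * Γ 0 1 1 - Γ 0 0 1 * Γ 1 1 0 := by
  simp only [ricciA, Fin.sum_univ_two, hΓ 1 0]
  ring

theorem ricciA_one_one (hΓ : ∀ i j k, Γ i j k = Γ j i k) :
    ricciA Γ 1 1 = Γ 0 0 0 * Γ 1 1 0 - Γ 0 1 0 ^ 2 + Γ 0 1 0 * Γ 1 1 1 - Γ 0 1 1 * Γ 1 1 0 := by
  simp only [ricciA, Fin.sum_univ_two, hΓ 1 0]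
  ring

theorem christoffel_mul_ricciA_one_one (hΓ : ∀ i j k, Γ i j k = Γ j i k) :
    Γ 0 0 1 * ricciA Γ 1 1 =
        Γ 0 1 0 * ricciA Γ 0 0 - (Γ 0 0 0 - Γ 0 1 1) * ricciA Γ 0 1 ∧
      Γ 0 1 1 * ricciA Γ 1 1 =
        Γ 1 1 0 * ricciA Γ 0 0 + (Γ 1 1 1 - Γ 0 1 0) * ricciA Γ 0 1 := by
  rw [ricciA_zero_zero hΓ, ricciA_zero_one hΓ, ricciA_one_one hΓ]
  constructor <;> ring

theorem christoffel_eq_zero_of_ricciA (hΓ : ∀ i j k, Γ i j k = Γ j i k)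
    (h00 : ricciA Γ 0 0 = 0) (h01 : ricciA Γ 0 1 = 0) (h11 : ricciA Γ 1 1 ≠ 0) :
    Γ 0 0 1 = 0 ∧ Γ 0 1 1 = 0 := by
  obtain ⟨hb, hd⟩ := christoffel_mul_ricciA_one_one hΓ
  rw [h00, h01] at hb hd
  exact ⟨(mul_eq_zero.1 (by simpa using hb)).resolve_right h11,
    (mul_eq_zero.1 (by simpa using hd)).resolve_right h11⟩

theorem ricciA_of_christoffel_eq_zero (hΓ : ∀ i j k, Γ i j k = Γ j i k)
    (hb : Γ 0 0 1 = 0) (hd : Γ 0 1 1 = 0) :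
    ricciA Γ 0 0 = 0 ∧ ricciA Γ 0 1 = 0 ∧
      ricciA Γ 1 1 = Γ 0 1 0 * (Γ 1 1 1 - Γ 0 1 0) + Γ 0 0 0 * Γ 1 1 0 := by
  rw [ricciA_zero_zero hΓ, ricciA_zero_one hΓ, ricciA_one_one hΓ, hb, hd]
  refine ⟨?_, ?_, ?_⟩ <;> ring

end TypeA

/-- for a non-flat Type A connection, the three stated conditions are
equivalent. -/
theorem stmt1 (Γ : Fin 2 → Fin 2 → Fin 2 → ℝ)
    (hΓ : ∀ i j k, Γ i j k = Γ j i k)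
    (hρ : ¬ ∀ j k, ricciA Γ j k = 0) :
    ((ricciA Γ 0 0 = 0 ∧ ricciA Γ 0 1 = 0 ∧ ricciA Γ 1 0 = 0) ↔
      (Γ 0 0 1 = 0 ∧ Γ 0 1 1 = 0)) ∧
    ((Γ 0 0 1 = 0 ∧ Γ 0 1 1 = 0) ↔
      (ricciA Γ 0 0 = 0 ∧ ricciA Γ 0 1 = 0 ∧ ricciA Γ 1 0 = 0 ∧
        ricciA Γ 1 1 = Γ 0 1 0 * (Γ 1 1 1 - Γ 0 1 0) + Γ 0 0 0 * Γ 1 1 0)) := by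
  have h10 : ricciA Γ 1 0 = ricciA Γ 0 1 := ricciA_comm hΓ 1 0
  have forward : ricciA Γ 0 0 = 0 → ricciA Γ 0 1 = 0 → Γ 0 0 1 = 0 ∧ Γ 0 1 1 = 0 := by
    intro h00 h01
    refine christoffel_eq_zero_of_ricciA hΓ h00 h01 fun h11 => hρ fun j k => ?_
    fin_cases j <;> fin_cases k <;> simp [h00, h01, h10, h11]
  have backward (hb : Γ 0 0 1 = 0) (hd : Γ 0 1 1 = 0) :
      ricciA Γ 0 0 = 0 ∧ ricciA Γ 0 1 = 0 ∧ ricciA Γ 1 0 = 0 ∧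
        ricciA Γ 1 1 = Γ 0 1 0 * (Γ 1 1 1 - Γ 0 1 0) + Γ 0 0 0 * Γ 1 1 0 := by
    obtain ⟨h00, h01, h11⟩ := ricciA_of_christoffel_eq_zero hΓ hb hd
    exact ⟨h00, h01, h10 ▸ h01, h11⟩
  exact ⟨⟨fun ⟨h00, h01, _⟩ => forward h00 h01,
      fun ⟨hb, hd⟩ => let ⟨h00, h01, h10, _⟩ := backward hb hd; ⟨h00, h01, h10⟩⟩,
    ⟨fun ⟨hb, hd⟩ => backward hb hd, fun ⟨h00, h01, _⟩ => forward h00 h01⟩⟩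
end
end

section
/- Let ∇ be a Type B connection on M = (0,∞)×ℝ, with Christoffel symbols Γ_{ij}^k = C_{ij}^k / x¹ for real constants C_{ij}^k = C_{ji}^k. Then the components of its Ricci tensor are: ρ₁₁ = (x¹)⁻²{C₁₂²(C₁₁¹ − C₁₂² + 1) + C₁₁²(C₂₂² − C₁₂¹)}, ρ₁₂ = (x¹)⁻²{−C₁₁²C₂₂¹ + C₁₂¹C₁₂² + C₂₂²}, ρ₂₁ = (x¹)⁻²{−C₁₁²C₂₂¹ + C₁₂¹C₁₂² − C₁₂¹}, and ρ₂₂ = (x¹)⁻²{C₁₁¹C₂₂¹ − (C₁₂¹)² + C₁₂¹C₂₂² − C₁₂²C₂₂¹ − C₂₂¹}. -/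
noncomputable section

/-- The coordinate directions of ℝ². -/
def ee : Fin 2 → ℝ × ℝ := ![(1, 0), (0, 1)]

/-- Partial derivative `∂_i f`. -/
def pd (i : Fin 2) (f : ℝ × ℝ → ℝ) : ℝ × ℝ → ℝ :=
  fun p => fderiv ℝ f p (ee i)

/-- Christoffel symbols `Γ_{ij}^k = C_{ij}^k / x¹` of a Type B connection on `(0,∞)×ℝ`. -/
def GammaB (C : Fin 2 → Fin 2 → Fin 2 → ℝ) (i j k : Fin 2) : ℝ × ℝ → ℝ :=
  fun p => C i j k / p.1

/-- Ricci tensor of a Type B connection: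
`ρ_{jk} = Σ_i (∂_i Γ_{jk}^i − ∂_j Γ_{ik}^i) + Σ_{i,p} (Γ_{ip}^i Γ_{jk}^p − Γ_{jp}^i Γ_{ik}^p)`. -/
def ricciB (C : Fin 2 → Fin 2 → Fin 2 → ℝ) (j k : Fin 2) : ℝ × ℝ → ℝ :=
  fun p => (∑ i, (pd i (GammaB C j k i) p - pd j (GammaB C i k i) p))
    + ∑ i, ∑ q, (GammaB C i q i p * GammaB C j k q p - GammaB C j q i p * GammaB C i k q p)

/-! Each Christoffel symbol `C / x¹` has differential `v ↦ -C v¹ / (x¹)²`, so both the derivative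
terms and the quadratic terms of the Ricci tensor are `(x¹)⁻²` times a polynomial in the constants
`C_{ij}^k`; the four components are that polynomial evaluated with `C_{21}^k = C_{12}^k`. -/

lemma fderiv_const_div_fst_apply (c : ℝ) {p : ℝ × ℝ} (hp : p.1 ≠ 0) (v : ℝ × ℝ) :
    fderiv ℝ (fun q : ℝ × ℝ => c / q.1) p v = -(c * v.1) / p.1 ^ 2 := by
  have h : HasFDerivAt (fun q : ℝ × ℝ => c / q.1) _ p :=
    ((hasFDerivAt_inv hp).comp p hasFDerivAt_fst).const_mul c
  rw [h.fderiv]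
  simp only [smul_apply, ContinuousLinearMap.comp_apply,
    ContinuousLinearMap.coe_fst', ContinuousLinearMap.toSpanSingleton_apply, smul_eq_mul, mul_neg]
  ring

lemma pd_GammaB (C : Fin 2 → Fin 2 → Fin 2 → ℝ) (i j k l : Fin 2) {p : ℝ × ℝ} (hp : p.1 ≠ 0) :
    pd l (GammaB C i j k) p = -(C i j k * (ee l).1) / p.1 ^ 2 :=
  fderiv_const_div_fst_apply _ hp _

lemma ricciB_eq (C : Fin 2 → Fin 2 → Fin 2 → ℝ) (j k : Fin 2) {p : ℝ × ℝ} (hp : p.1 ≠ 0) :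
    ricciB C j k p = (p.1 ^ 2)⁻¹ *
      (∑ i, (C i k i * (ee j).1 - C j k i * (ee i).1)
        + ∑ i, ∑ q, (C i q i * C j k q - C j q i * C i k q)) := by
  simp only [ricciB, pd_GammaB C _ _ _ _ hp, GammaB, Fin.sum_univ_two]
  field_simp
  ring

/-- explicit components of the Ricci tensor of a Type B connection. -/
theorem stmt3 (C : Fin 2 → Fin 2 → Fin 2 → ℝ)
    (hC : ∀ i j k, C i j k = C j i k) :
    ∀ p : ℝ × ℝ, 0 < p.1 →
      ricciB C 0 0 p =
          (p.1 ^ 2)⁻¹ * (C 0 1 1 * (C 0 0 0 - C 0 1 1 + 1) + C 0 0 1 * (C 1 1 1 - C 0 1 0)) ∧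
      ricciB C 0 1 p =
          (p.1 ^ 2)⁻¹ * (-(C 0 0 1 * C 1 1 0) + C 0 1 0 * C 0 1 1 + C 1 1 1) ∧
      ricciB C 1 0 p =
          (p.1 ^ 2)⁻¹ * (-(C 0 0 1 * C 1 1 0) + C 0 1 0 * C 0 1 1 - C 0 1 0) ∧
      ricciB C 1 1 p =
          (p.1 ^ 2)⁻¹ * (C 0 0 0 * C 1 1 0 - C 0 1 0 ^ 2 + C 0 1 0 * C 1 1 1
            - C 0 1 1 * C 1 1 0 - C 1 1 0) := by
  intro p hp
  simp only [ricciB_eq C _ _ hp.ne', Fin.sum_univ_two, ee, Matrix.cons_val_zero,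
    Matrix.cons_val_one, hC 1 0]
  refine ⟨?_, ?_, ?_, ?_⟩ <;> ring
end
end

section
/- Let ∇ be a Type B connection on M = (0,∞)×ℝ (Christoffel symbols Γ_{ij}^k = C_{ij}^k/x¹), and assume ∇ is not flat, i.e. its Ricci tensor ρ is not identically zero. Then the following are equivalent: (1) C₁₂¹ = 0, C₂₂¹ = 0, and C₂₂² = 0; (2) ρ = (x¹)⁻²(1 + C₁₁¹ − C₁₂²)C₁₂² dx¹⊗dx¹ and ∇ρ = −2(x¹)⁻³(1 + C₁₁¹)(1 + C₁₁¹ − C₁₂²)C₁₂² dx¹⊗dx¹⊗dx¹; (3) ρ is symmetric, recurrent (there is a smooth 1-form ω on M with ρ_{jk;i} = ω_i ρ_{jk}), of rank 1 at each point of M, and ∇ρ is totally symmetric in its three indices. -/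
noncomputable section

/-- The underlying manifold `M = (0,∞) × ℝ` of a Type B geometry. -/
def MB : Set (ℝ × ℝ) := {p | 0 < p.1}

/-- Components `ρ_{jk;i} = ∂_i ρ_{jk} − Σ_l (Γ_{ij}^l ρ_{lk} + Γ_{ik}^l ρ_{jl})` of the
covariant derivative of the Ricci tensor. -/
def nablaRicciB (C : Fin 2 → Fin 2 → Fin 2 → ℝ) (i j k : Fin 2) : ℝ × ℝ → ℝ :=
  fun p => pd i (ricciB C j k) p
    - ∑ l, (GammaB C i j l p * ricciB C l k p + GammaB C i k l p * ricciB C j l p)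

/-! ### Auxiliary derivative computations -/

lemma pd_comp_fst (g : ℝ → ℝ) (g' : ℝ) (p : ℝ × ℝ) (h : HasDerivAt g g' p.1) (i : Fin 2) :
    pd i (fun q => g q.1) p = if i = 0 then g' else 0 := by
  have H : HasFDerivAt (fun q : ℝ × ℝ => g q.1)
      (g' • ContinuousLinearMap.fst ℝ ℝ ℝ) p :=
    h.comp_hasFDerivAt p hasFDerivAt_fst
  unfold pd
  rw [H.fderiv]
  fin_cases i <;> simp [ee]

lemma hasDerivAt_cdiv (c x : ℝ) (hx : x ≠ 0) :
    HasDerivAt (fun t : ℝ => c / t) (-c / x ^ 2) x := by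
  have h := (hasDerivAt_inv hx).const_mul c
  simp only [div_eq_mul_inv]
  refine h.congr_deriv ?_
  ring

lemma hasDerivAt_cdiv2 (c x : ℝ) (hx : x ≠ 0) :
    HasDerivAt (fun t : ℝ => c / t ^ 2) (-2 * c / x ^ 3) x := by
  have h2 : HasDerivAt (fun t : ℝ => t ^ 2) (2 * x) x := by
    simpa using hasDerivAt_pow 2 x
  have h := (h2.inv (pow_ne_zero 2 hx)).const_mul c
  simp only [div_eq_mul_inv]
  refine h.congr_deriv ?_
  field_simp

lemma pd_cdiv (c : ℝ) (p : ℝ × ℝ) (hp : p.1 ≠ 0) (i : Fin 2) :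
    pd i (fun q : ℝ × ℝ => c / q.1) p = (if i = 0 then -c else 0) / p.1 ^ 2 := by
  rw [pd_comp_fst (fun t => c / t) (-c / p.1 ^ 2) p (hasDerivAt_cdiv c p.1 hp)]
  split <;> simp

lemma pd_cdiv2 (c : ℝ) (p : ℝ × ℝ) (hp : p.1 ≠ 0) (i : Fin 2) :
    pd i (fun q : ℝ × ℝ => c / q.1 ^ 2) p = (if i = 0 then -2 * c else 0) / p.1 ^ 3 := by
  rw [pd_comp_fst (fun t => c / t ^ 2) (-2 * c / p.1 ^ 3) p (hasDerivAt_cdiv2 c p.1 hp)]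
  split <;> simp

/-! ### Polynomial (constant) parts of the Ricci tensor and its covariant derivative -/

def RicP (C : Fin 2 → Fin 2 → Fin 2 → ℝ) (j k : Fin 2) : ℝ :=
  (∑ i, ((if i = (0 : Fin 2) then -C j k i else 0) - (if j = (0 : Fin 2) then -C i k i else 0)))
  + ∑ i, ∑ q, (C i q i * C j k q - C j q i * C i k q)

lemma ricciB_eq_s4 (C : Fin 2 → Fin 2 → Fin 2 → ℝ) (j k : Fin 2) (p : ℝ × ℝ) (hp : p.1 ≠ 0) :
    ricciB C j k p = RicP C j k / p.1 ^ 2 := by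
  have hpd : ∀ (c : ℝ) (i : Fin 2),
      pd i (fun q : ℝ × ℝ => c / q.1) p = (if i = 0 then -c else 0) / p.1 ^ 2 :=
    fun c i => pd_cdiv c p hp i
  have hG : ∀ a b c : Fin 2, GammaB C a b c = fun q : ℝ × ℝ => C a b c / q.1 :=
    fun _ _ _ => rfl
  simp only [ricciB, hG, hpd, RicP]
  fin_cases j <;>
    · simp only [Fin.sum_univ_two, Fin.isValue]
      norm_num
      field_simp

def NRP (C : Fin 2 → Fin 2 → Fin 2 → ℝ) (i j k : Fin 2) : ℝ :=
  (if i = (0 : Fin 2) then -2 * RicP C j k else 0)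
  - ∑ l, (C i j l * RicP C l k + C i k l * RicP C j l)

lemma nablaRicciB_eq (C : Fin 2 → Fin 2 → Fin 2 → ℝ) (i j k : Fin 2) (p : ℝ × ℝ)
    (hp : p.1 ≠ 0) :
    nablaRicciB C i j k p = NRP C i j k / p.1 ^ 3 := by
  have hopen : IsOpen {q : ℝ × ℝ | q.1 ≠ 0} :=
    isOpen_ne.preimage continuous_fst
  have hev : ricciB C j k =ᶠ[nhds p] fun q => RicP C j k / q.1 ^ 2 := by
    filter_upwards [hopen.mem_nhds hp] with q hq
    exact ricciB_eq_s4 C j k q hq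
  have hfd : pd i (ricciB C j k) p = (if i = 0 then -2 * RicP C j k else 0) / p.1 ^ 3 := by
    show fderiv ℝ (ricciB C j k) p (ee i) = _
    rw [hev.fderiv_eq]
    exact pd_cdiv2 (RicP C j k) p hp i
  have hG : ∀ a b c : Fin 2, GammaB C a b c = fun q : ℝ × ℝ => C a b c / q.1 :=
    fun _ _ _ => rfl
  simp only [nablaRicciB, hG, hfd, NRP, ricciB_eq_s4 C _ _ p hp]
  fin_cases i <;>
    · simp only [Fin.sum_univ_two, Fin.isValue]
      norm_num
      field_simp

/-! ### Component formulas -/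

lemma ric_diff (C : Fin 2 → Fin 2 → Fin 2 → ℝ) (hC : ∀ k, C 1 0 k = C 0 1 k) :
    RicP C 0 1 - RicP C 1 0 = C 1 1 1 + C 0 1 0 := by
  simp [RicP, Fin.sum_univ_two, hC]; ring

lemma ric11 (C : Fin 2 → Fin 2 → Fin 2 → ℝ) (hC : ∀ k, C 1 0 k = C 0 1 k) :
    RicP C 1 1 = C 1 1 0 * (C 0 0 0 - 1 - C 0 1 1) + C 0 1 0 * C 1 1 1 - C 0 1 0 ^ 2 := by
  simp [RicP, Fin.sum_univ_two, hC]; ring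

lemma nrpA1 (C : Fin 2 → Fin 2 → Fin 2 → ℝ) (hC : ∀ k, C 1 0 k = C 0 1 k) :
    NRP C 1 1 0 = -(C 1 1 0 * RicP C 0 0 + C 1 1 1 * RicP C 1 0
      + C 0 1 0 * RicP C 1 0 + C 0 1 1 * RicP C 1 1) := by
  simp [NRP, Fin.sum_univ_two, hC]; ring

lemma nrpA2 (C : Fin 2 → Fin 2 → Fin 2 → ℝ) (hC : ∀ k, C 1 0 k = C 0 1 k) :
    NRP C 1 0 1 = -(C 0 1 0 * RicP C 0 1 + C 0 1 1 * RicP C 1 1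
      + C 1 1 0 * RicP C 0 0 + C 1 1 1 * RicP C 0 1) := by
  simp [NRP, Fin.sum_univ_two, hC]; ring

lemma nrpA3 (C : Fin 2 → Fin 2 → Fin 2 → ℝ) (hC : ∀ k, C 1 0 k = C 0 1 k) :
    NRP C 0 1 0 = -2 * RicP C 1 0 - (C 0 1 0 * RicP C 0 0 + C 0 1 1 * RicP C 1 0
      + C 0 0 0 * RicP C 1 0 + C 0 0 1 * RicP C 1 1) := by
  simp [NRP, Fin.sum_univ_two, hC]; ring

lemma nrpA4 (C : Fin 2 → Fin 2 → Fin 2 → ℝ) (hC : ∀ k, C 1 0 k = C 0 1 k) :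
    NRP C 1 0 0 = -(2 * (C 0 1 0 * RicP C 0 0) + C 0 1 1 * RicP C 1 0
      + C 0 1 1 * RicP C 0 1) := by
  simp [NRP, Fin.sum_univ_two, hC]; ring

lemma nrpA5 (C : Fin 2 → Fin 2 → Fin 2 → ℝ) (hC : ∀ k, C 1 0 k = C 0 1 k) :
    NRP C 0 1 1 = -2 * RicP C 1 1 - (C 0 1 0 * RicP C 0 1 + C 0 1 1 * RicP C 1 1
      + C 0 1 0 * RicP C 1 0 + C 0 1 1 * RicP C 1 1) := by
  simp [NRP, Fin.sum_univ_two, hC]; ring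

lemma ricP_vals (C : Fin 2 → Fin 2 → Fin 2 → ℝ) (hC : ∀ k, C 1 0 k = C 0 1 k)
    (hc : C 0 1 0 = 0) (he : C 1 1 0 = 0) (hf : C 1 1 1 = 0) (j k : Fin 2) :
    RicP C j k = if j = 0 ∧ k = 0 then (1 + C 0 0 0 - C 0 1 1) * C 0 1 1 else 0 := by
  fin_cases j <;> fin_cases k <;>
    · simp [RicP, Fin.sum_univ_two, hC, hc, he, hf]
      try ring

lemma nrP_vals (C : Fin 2 → Fin 2 → Fin 2 → ℝ) (hC : ∀ k, C 1 0 k = C 0 1 k)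
    (hc : C 0 1 0 = 0) (he : C 1 1 0 = 0) (hf : C 1 1 1 = 0) (i j k : Fin 2) :
    NRP C i j k = if i = 0 ∧ j = 0 ∧ k = 0 then
      -2 * (1 + C 0 0 0) * ((1 + C 0 0 0 - C 0 1 1) * C 0 1 1) else 0 := by
  fin_cases i <;> fin_cases j <;> fin_cases k <;>
    · simp [NRP, Fin.sum_univ_two, ricP_vals C hC hc he hf, hC, hc, he, hf]
      try ring

/-! ### The three implications -/

section implications
variable (C : Fin 2 → Fin 2 → Fin 2 → ℝ)

def cond1 : Prop := C 0 1 0 = 0 ∧ C 1 1 0 = 0 ∧ C 1 1 1 = 0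

def cond2 : Prop :=
  (∀ p ∈ MB, ∀ j k : Fin 2,
      ricciB C j k p =
        if j = 0 ∧ k = 0 then (p.1 ^ 2)⁻¹ * ((1 + C 0 0 0 - C 0 1 1) * C 0 1 1) else 0) ∧
    (∀ p ∈ MB, ∀ i j k : Fin 2,
      nablaRicciB C i j k p =
        if i = 0 ∧ j = 0 ∧ k = 0 then
          (p.1 ^ 3)⁻¹ * (-2 * (1 + C 0 0 0) * (1 + C 0 0 0 - C 0 1 1) * C 0 1 1)
        else 0)

def cond3 : Prop :=
  (∀ p ∈ MB, ∀ j k : Fin 2, ricciB C j k p = ricciB C k j p) ∧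
    (∃ ω : Fin 2 → ℝ × ℝ → ℝ, (∀ i, ContDiffOn ℝ (⊤ : ℕ∞) (ω i) MB) ∧
      ∀ p ∈ MB, ∀ i j k : Fin 2, nablaRicciB C i j k p = ω i p * ricciB C j k p) ∧
    (∀ p ∈ MB, (¬ ∀ j k : Fin 2, ricciB C j k p = 0) ∧
      ricciB C 0 0 p * ricciB C 1 1 p - ricciB C 0 1 p * ricciB C 1 0 p = 0) ∧
    (∀ p ∈ MB, ∀ i j k : Fin 2,
      nablaRicciB C i j k p = nablaRicciB C j i k p ∧
      nablaRicciB C i j k p = nablaRicciB C i k j p)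

lemma imp12 (hC : ∀ k, C 1 0 k = C 0 1 k) (h1 : cond1 C) : cond2 C := by
  obtain ⟨hc, he, hf⟩ := h1
  constructor
  · intro p hp j k
    have hp0 : (0 : ℝ) < p.1 := hp
    have hp1 : p.1 ≠ 0 := ne_of_gt hp0
    rw [ricciB_eq_s4 C j k p hp1, ricP_vals C hC hc he hf j k]
    split_ifs with h
    · rw [div_eq_inv_mul]
    · simp
  · intro p hp i j k
    have hp0 : (0 : ℝ) < p.1 := hp
    have hp1 : p.1 ≠ 0 := ne_of_gt hp0
    rw [nablaRicciB_eq C i j k p hp1, nrP_vals C hC hc he hf i j k]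
    split_ifs with h
    · rw [div_eq_inv_mul]; ring
    · simp

lemma imp23 (hC : ∀ k, C 1 0 k = C 0 1 k)
    (hρ : ¬ ∀ p ∈ MB, ∀ j k, ricciB C j k p = 0) (h2 : cond2 C) : cond3 C := by
  obtain ⟨hr, hn⟩ := h2
  have hK : (1 + C 0 0 0 - C 0 1 1) * C 0 1 1 ≠ 0 := by
    intro hK0
    apply hρ
    intro p hp j k
    rw [hr p hp j k]
    split_ifs <;> simp [hK0]
  refine ⟨?_, ?_, ?_, ?_⟩
  · intro p hp j k
    rw [hr p hp j k, hr p hp k j]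
    fin_cases j <;> fin_cases k <;> norm_num
  · refine ⟨![fun p => -2 * (1 + C 0 0 0) / p.1, fun _ => 0], ?_, ?_⟩
    · intro i
      fin_cases i
      · exact ContDiffOn.div contDiffOn_const contDiff_fst.contDiffOn
          (fun p hp => ne_of_gt hp)
      · exact contDiffOn_const
    · intro p hp i j k
      have hp0 : (0 : ℝ) < p.1 := hp
      have hp1 : p.1 ≠ 0 := ne_of_gt hp0
      rw [hn p hp i j k, hr p hp j k]
      fin_cases i <;> fin_cases j <;> fin_cases k <;> norm_num [Matrix.cons_val_zero]
      field_simp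
  · intro p hp
    have hp0 : (0 : ℝ) < p.1 := hp
    have hp1 : p.1 ≠ 0 := ne_of_gt hp0
    constructor
    · intro hall
      have h00 := hall 0 0
      rw [hr p hp 0 0] at h00
      rw [if_pos ⟨rfl, rfl⟩] at h00
      have hinv : (p.1 ^ 2)⁻¹ ≠ 0 := inv_ne_zero (pow_ne_zero 2 hp1)
      exact (mul_ne_zero hinv hK) h00
    · rw [hr p hp 0 0, hr p hp 1 1, hr p hp 0 1, hr p hp 1 0]
      norm_num
  · intro p hp i j k
    rw [hn p hp i j k, hn p hp j i k, hn p hp i k j]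
    fin_cases i <;> fin_cases j <;> fin_cases k <;> norm_num

lemma imp31 (hC : ∀ k, C 1 0 k = C 0 1 k) (h3 : cond3 C) : cond1 C := by
  obtain ⟨hsym, ⟨ω, _hωs, hωrec⟩, hrank, htot⟩ := h3
  set p : ℝ × ℝ := (1, 0) with hpdef
  have hp : p ∈ MB := by show (0 : ℝ) < 1; norm_num
  have hp1 : p.1 ≠ 0 := one_ne_zero
  have hone : p.1 ^ 2 = 1 := by norm_num [hpdef]
  have hone3 : p.1 ^ 3 = 1 := by norm_num [hpdef]
  have hric : ∀ j k, ricciB C j k p = RicP C j k := by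
    intro j k; rw [ricciB_eq_s4 C j k p hp1, hone, div_one]
  have hnr : ∀ i j k, nablaRicciB C i j k p = NRP C i j k := by
    intro i j k; rw [nablaRicciB_eq C i j k p hp1, hone3, div_one]
  -- symmetry of ρ gives C 1 1 1 = - C 0 1 0
  have hs : RicP C 1 0 = RicP C 0 1 := by
    have h := hsym p hp 1 0
    rw [hric, hric] at h; exact h
  have hfm : C 1 1 1 = -C 0 1 0 := by
    have h := ric_diff C hC
    rw [hs] at h
    linarith
  -- rank-one conditions at p
  have hdet : RicP C 0 0 * RicP C 1 1 - RicP C 0 1 * RicP C 1 0 = 0 := by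
    have h := (hrank p hp).2
    rw [hric, hric, hric, hric] at h; exact h
  have hw : ∀ i j k, NRP C i j k = ω i p * RicP C j k := by
    intro i j k
    have h := hωrec p hp i j k
    rw [hric, hnr] at h; exact h
  by_cases hr11 : RicP C 1 1 = 0
  · -- Case A: ρ₁₁ = 0
    have h01 : RicP C 0 1 = 0 := by
      have : RicP C 0 1 * RicP C 0 1 = 0 := by
        have := hdet; rw [hr11, hs] at this; linarith
      exact (mul_self_eq_zero).mp this
    have h10 : RicP C 1 0 = 0 := by rw [hs, h01]
    have h00 : RicP C 0 0 ≠ 0 := by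
      intro h0
      apply (hrank p hp).1
      intro j k
      rw [hric]
      fin_cases j <;> fin_cases k <;> assumption
    have he : C 1 1 0 = 0 := by
      have h110 : NRP C 1 1 0 = ω 1 p * RicP C 1 0 := hw 1 1 0
      rw [h10, mul_zero, nrpA1 C hC, h10, hr11] at h110
      have : C 1 1 0 * RicP C 0 0 = 0 := by linarith
      rcases mul_eq_zero.mp this with h | h
      · exact h
      · exact absurd h h00
    have hc : C 0 1 0 = 0 := by
      have h := ric11 C hC
      rw [hr11, he, hfm] at h
      nlinarith [sq_nonneg (C 0 1 0)]
    exact ⟨hc, he, by rw [hfm, hc, neg_zero]⟩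
  · -- Case B: ρ₁₁ ≠ 0, derive a contradiction
    exfalso
    -- total symmetry gives U1
    have hU1 : C 0 1 0 * RicP C 0 0 + (C 0 1 1 - C 0 0 0 - 2) * RicP C 0 1
        - C 0 0 1 * RicP C 1 1 = 0 := by
      have h := (htot p hp 0 1 0).1
      rw [hnr, hnr, nrpA3 C hC, nrpA4 C hC, hs] at h
      linarith
    -- recurrence (i = 0) minor gives U2
    have hminor : NRP C 0 1 0 * RicP C 1 1 = NRP C 0 1 1 * RicP C 1 0 := by
      rw [hw 0 1 0, hw 0 1 1]; ring
    have hU2' : RicP C 1 1 * (C 0 1 0 * RicP C 0 0 + (C 0 1 1 - C 0 0 0) * RicP C 0 1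
        - C 0 0 1 * RicP C 1 1) = 0 := by
      rw [nrpA3 C hC, nrpA5 C hC, hs] at hminor
      have hdet' : RicP C 0 0 * RicP C 1 1 - RicP C 0 1 * RicP C 0 1 = 0 := by
        have := hdet; rw [hs] at this; linarith
      linear_combination hminor + 2 * C 0 1 0 * hdet'
    have hU2 : C 0 1 0 * RicP C 0 0 + (C 0 1 1 - C 0 0 0) * RicP C 0 1
        - C 0 0 1 * RicP C 1 1 = 0 := by
      rcases mul_eq_zero.mp hU2' with h | h
      · exact absurd h hr11
      · exact h
    have h01 : RicP C 0 1 = 0 := by nlinarith [hU1, hU2]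
    have h10 : RicP C 1 0 = 0 := by rw [hs, h01]
    have h00 : RicP C 0 0 = 0 := by
      have : RicP C 0 0 * RicP C 1 1 = 0 := by
        rw [h01, h10] at hdet; linear_combination hdet
      rcases mul_eq_zero.mp this with h | h
      · exact h
      · exact absurd h hr11
    have hd : C 0 1 1 = 0 := by
      have h101 : NRP C 1 0 1 = ω 1 p * RicP C 0 1 := hw 1 0 1
      rw [h01, mul_zero, nrpA2 C hC, h01, h00] at h101
      have : C 0 1 1 * RicP C 1 1 = 0 := by linarith
      rcases mul_eq_zero.mp this with h | h
      · exact h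
      · exact absurd h hr11
    have hcontr := (htot p hp 0 1 1).1
    rw [hnr, hnr, nrpA5 C hC, nrpA2 C hC, h01, h10, h00, hd] at hcontr
    apply hr11
    linarith

end implications

/-- for a non-flat Type B connection, the three stated conditions are
equivalent. -/
theorem stmt4 (C : Fin 2 → Fin 2 → Fin 2 → ℝ)
    (hC : ∀ i j k, C i j k = C j i k)
    (hρ : ¬ ∀ p ∈ MB, ∀ j k, ricciB C j k p = 0) :
    ((C 0 1 0 = 0 ∧ C 1 1 0 = 0 ∧ C 1 1 1 = 0) ↔
      ((∀ p ∈ MB, ∀ j k : Fin 2,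
          ricciB C j k p =
            if j = 0 ∧ k = 0 then (p.1 ^ 2)⁻¹ * ((1 + C 0 0 0 - C 0 1 1) * C 0 1 1) else 0) ∧
        (∀ p ∈ MB, ∀ i j k : Fin 2,
          nablaRicciB C i j k p =
            if i = 0 ∧ j = 0 ∧ k = 0 then
              (p.1 ^ 3)⁻¹ * (-2 * (1 + C 0 0 0) * (1 + C 0 0 0 - C 0 1 1) * C 0 1 1)
            else 0))) ∧
    (((∀ p ∈ MB, ∀ j k : Fin 2,
          ricciB C j k p =
            if j = 0 ∧ k = 0 then (p.1 ^ 2)⁻¹ * ((1 + C 0 0 0 - C 0 1 1) * C 0 1 1) else 0) ∧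
        (∀ p ∈ MB, ∀ i j k : Fin 2,
          nablaRicciB C i j k p =
            if i = 0 ∧ j = 0 ∧ k = 0 then
              (p.1 ^ 3)⁻¹ * (-2 * (1 + C 0 0 0) * (1 + C 0 0 0 - C 0 1 1) * C 0 1 1)
            else 0)) ↔
      ((∀ p ∈ MB, ∀ j k : Fin 2, ricciB C j k p = ricciB C k j p) ∧
        (∃ ω : Fin 2 → ℝ × ℝ → ℝ, (∀ i, ContDiffOn ℝ (⊤ : ℕ∞) (ω i) MB) ∧
          ∀ p ∈ MB, ∀ i j k : Fin 2, nablaRicciB C i j k p = ω i p * ricciB C j k p) ∧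
        (∀ p ∈ MB, (¬ ∀ j k : Fin 2, ricciB C j k p = 0) ∧
          ricciB C 0 0 p * ricciB C 1 1 p - ricciB C 0 1 p * ricciB C 1 0 p = 0) ∧
        (∀ p ∈ MB, ∀ i j k : Fin 2,
          nablaRicciB C i j k p = nablaRicciB C j i k p ∧
          nablaRicciB C i j k p = nablaRicciB C i k j p))) := by
  have hC' : ∀ k, C 1 0 k = C 0 1 k := fun k => hC 1 0 k
  constructor
  · exact ⟨fun h1 => imp12 C hC' h1,
      fun h2 => imp31 C hC' (imp23 C hC' hρ h2)⟩
  · exact ⟨fun h2 => imp23 C hC' hρ h2,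
      fun h3 => imp12 C hC' (imp31 C hC' h3)⟩
end
end

section
/- Let ∇ be a Type A connection on ℝ² whose Ricci tensor satisfies ρ₁₁ = ρ₁₂ = ρ₂₁ = 0 and ρ₂₂ ≠ 0. Then every affine Killing vector field X = X¹∂₁ + X²∂₂ of ∇ has constant second component, i.e. there is c₂ ∈ ℝ with X²(x¹,x²) = c₂ for all (x¹,x²). -/
noncomputable section

/-- Affine Killing vector field for a Type A connection (constant Christoffel symbols):
`∂_i∂_j X^k + Σ_l (Γ_{lj}^k ∂_i X^l + Γ_{il}^k ∂_j X^l − Γ_{ij}^l ∂_l X^k) = 0`. -/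
def IsKillingA (Γ : Fin 2 → Fin 2 → Fin 2 → ℝ) (X : Fin 2 → ℝ × ℝ → ℝ) : Prop :=
  ∀ i j k : Fin 2, ∀ p : ℝ × ℝ,
    pd i (pd j (X k)) p
      + ∑ l, (Γ l j k * pd i (X l) p + Γ i l k * pd j (X l) p - Γ i j l * pd l (X k) p) = 0

lemma pd_smooth {f : ℝ × ℝ → ℝ} (hf : ContDiff ℝ (⊤ : ℕ∞) f) (i : Fin 2) : ContDiff ℝ (⊤ : ℕ∞) (pd i f) :=
  (hf.fderiv_right (by simp)).clm_apply contDiff_const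

lemma pd_eq_snd {f : ℝ × ℝ → ℝ} (hf : ContDiff ℝ (⊤ : ℕ∞) f) (a b : Fin 2) (p : ℝ × ℝ) :
    pd a (pd b f) p = fderiv ℝ (fderiv ℝ f) p (ee a) (ee b) := by
  have hdf : DifferentiableAt ℝ (fderiv ℝ f) p :=
    ((hf.fderiv_right (m := 1) (by exact WithTop.coe_le_coe.mpr le_top)).differentiable one_ne_zero).differentiableAt
  show fderiv ℝ (fun q => fderiv ℝ f q (ee b)) p (ee a) = _
  rw [fderiv_clm_apply hdf (differentiableAt_const _)]
  simp

lemma pd_comm {f : ℝ × ℝ → ℝ} (hf : ContDiff ℝ (⊤ : ℕ∞) f) (i j : Fin 2) (p : ℝ × ℝ) :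
    pd i (pd j f) p = pd j (pd i f) p := by
  have hsymm : IsSymmSndFDerivAt ℝ f p := hf.contDiffAt.isSymmSndFDerivAt (by rw [minSmoothness_of_isRCLikeNormedField]; exact (WithTop.coe_le_coe.mpr (le_top : (2:ℕ∞) ≤ ⊤) : ((2:ℕ∞) : WithTop ℕ∞) ≤ ((⊤:ℕ∞) : WithTop ℕ∞)))
  rw [pd_eq_snd hf, pd_eq_snd hf, hsymm]

lemma pd_comb (m : Fin 2) (c1 c2 c3 c4 c5 c6 : ℝ) (f1 f2 f3 f4 f5 f6 : ℝ × ℝ → ℝ)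
    (h1 : Differentiable ℝ f1) (h2 : Differentiable ℝ f2) (h3 : Differentiable ℝ f3)
    (h4 : Differentiable ℝ f4) (h5 : Differentiable ℝ f5) (h6 : Differentiable ℝ f6)
    (p : ℝ × ℝ) :
    pd m (fun q => -(c1 * f1 q + c2 * f2 q - c3 * f3 q) - (c4 * f4 q + c5 * f5 q - c6 * f6 q)) p
      = -(c1 * pd m f1 p + c2 * pd m f2 p - c3 * pd m f3 p)
        - (c4 * pd m f4 p + c5 * pd m f5 p - c6 * pd m f6 p) := by
  have H := (((((h1 p).hasFDerivAt.const_mul c1).add ((h2 p).hasFDerivAt.const_mul c2)).sub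
      ((h3 p).hasFDerivAt.const_mul c3)).neg.sub
      ((((h4 p).hasFDerivAt.const_mul c4).add ((h5 p).hasFDerivAt.const_mul c5)).sub
      ((h6 p).hasFDerivAt.const_mul c6)))
  show fderiv ℝ _ p (ee m) = _
  rw [(show HasFDerivAt (fun q => -(c1 * f1 q + c2 * f2 q - c3 * f3 q) - (c4 * f4 q + c5 * f5 q - c6 * f6 q)) _ p from H).fderiv]
  simp [pd]

/-- if the Ricci tensor of a Type A connection is `ρ₂₂ dx²⊗dx²` with
`ρ₂₂ ≠ 0`, then every affine Killing vector field has constant second component. -/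
theorem stmt5 (Γ : Fin 2 → Fin 2 → Fin 2 → ℝ)
    (hΓ : ∀ i j k, Γ i j k = Γ j i k)
    (h00 : ricciA Γ 0 0 = 0) (h01 : ricciA Γ 0 1 = 0) (h10 : ricciA Γ 1 0 = 0)
    (h11 : ricciA Γ 1 1 ≠ 0)
    (X : Fin 2 → ℝ × ℝ → ℝ) (hX : ∀ k, ContDiff ℝ (⊤ : ℕ∞) (X k))
    (hK : IsKillingA Γ X) :
    ∃ c₂ : ℝ, ∀ p : ℝ × ℝ, X 1 p = c₂ := by
  have hD : ∀ k i : Fin 2, ContDiff ℝ (⊤ : ℕ∞) (pd i (X k)) := fun k i => pd_smooth (hX k) i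
  have hDd : ∀ k i : Fin 2, Differentiable ℝ (pd i (X k)) :=
    fun k i => (hD k i).differentiable (by simp)
  -- functional form of the Killing equation
  have hfun : ∀ i j k : Fin 2, pd i (pd j (X k)) =
      fun q => -(Γ 0 j k * pd i (X 0) q + Γ i 0 k * pd j (X 0) q - Γ i j 0 * pd 0 (X k) q)
        - (Γ 1 j k * pd i (X 1) q + Γ i 1 k * pd j (X 1) q - Γ i j 1 * pd 1 (X k) q) := by
    intro i j k
    funext q
    have h := hK i j k q
    simp only [Fin.sum_univ_two] at h
    linarith
  -- second derivatives of first derivatives, expanded to second derivatives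
  have hsecond : ∀ m i j k : Fin 2, ∀ p : ℝ × ℝ,
      pd m (pd i (pd j (X k))) p
        = -(Γ 0 j k * pd m (pd i (X 0)) p + Γ i 0 k * pd m (pd j (X 0)) p
            - Γ i j 0 * pd m (pd 0 (X k)) p)
          - (Γ 1 j k * pd m (pd i (X 1)) p + Γ i 1 k * pd m (pd j (X 1)) p
            - Γ i j 1 * pd m (pd 1 (X k)) p) := by
    intro m i j k p
    rw [hfun i j k]
    exact pd_comb m _ _ _ _ _ _ _ _ _ _ _ _
      (hDd 0 i) (hDd 0 j) (hDd k 0) (hDd 1 i) (hDd 1 j) (hDd k 1) p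
  -- pointwise version of the Killing equation
  suffices hzero : ∀ p : ℝ × ℝ, fderiv ℝ (X 1) p = 0 by
    refine ⟨X 1 0, fun p => is_const_of_fderiv_eq_zero ((hX 1).differentiable (by simp)) hzero p 0⟩
  have hcomp : ∀ p : ℝ × ℝ, pd 0 (X 1) p = 0 ∧ pd 1 (X 1) p = 0 := by
    intro p
    have hpt : ∀ m a b : Fin 2, pd m (pd a (X b)) p
        = -(Γ 0 a b * pd m (X 0) p + Γ m 0 b * pd a (X 0) p - Γ m a 0 * pd 0 (X b) p)
          - (Γ 1 a b * pd m (X 1) p + Γ m 1 b * pd a (X 1) p - Γ m a 1 * pd 1 (X b) p) := by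
      intro m a b
      have h := hK m a b p
      simp only [Fin.sum_univ_two] at h
      linarith
    have comm00 := pd_comm (hD 0 0) 0 1 p
    have comm10 := pd_comm (hD 0 1) 0 1 p
    rw [hsecond 0 1 0 0, hsecond 1 0 0 0] at comm00
    rw [hsecond 0 1 1 0, hsecond 1 0 1 0] at comm10
    simp only [hpt] at comm00 comm10
    have e0 := hΓ 1 0 0
    have e1 := hΓ 1 0 1
    have r00 : ricciA Γ 0 0 = 0 := h00
    have r01 : ricciA Γ 0 1 = 0 := h01
    have r10 : ricciA Γ 1 0 = 0 := h10
    simp only [ricciA, Fin.sum_univ_two, e0, e1] at r00 r01 r10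
    simp only [e0, e1] at comm00 comm10
    have key1 : ricciA Γ 1 1 * pd 1 (X 1) p = 0 := by
      simp only [ricciA, Fin.sum_univ_two, e0, e1]
      linear_combination (-(1:ℝ)/2) * comm10 - pd 1 (X 0) p * r10
    have key0 : ricciA Γ 1 1 * pd 0 (X 1) p = 0 := by
      simp only [ricciA, Fin.sum_univ_two, e0, e1]
      linear_combination (-(1:ℝ)) * comm00 - pd 1 (X 0) p * r00
        - (pd 0 (X 0) p + pd 1 (X 1) p) * r01
    exact ⟨(mul_eq_zero.mp key0).resolve_left h11, (mul_eq_zero.mp key1).resolve_left h11⟩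
  intro p
  refine ContinuousLinearMap.ext fun v => ?_
  obtain ⟨x, y⟩ := v
  have hv : ((x, y) : ℝ × ℝ) = x • ((1:ℝ), (0:ℝ)) + y • ((0:ℝ), (1:ℝ)) := by
    apply Prod.ext <;> simp
  have h0 : fderiv ℝ (X 1) p (1, 0) = 0 := by
    have := (hcomp p).1; simpa [pd, ee] using this
  have h1 : fderiv ℝ (X 1) p (0, 1) = 0 := by
    have := (hcomp p).2; simpa [pd, ee] using this
  rw [hv, map_add, map_smul, map_smul, h0, h1]
  simp
end
end

section
/- Let ∇ be a Type B connection on M = (0,∞)×ℝ with Christoffel symbols Γ_{ij}^k = C_{ij}^k/x¹. (i) For any real a ≠ 0, the vector field (x¹)^a ∂₂ is an affine Killing field for ∇ if and only if C₁₂¹ = 0, C₂₂¹ = 0, C₂₂² = 0 and a = 1 + C₁₁¹ − 2C₁₂². (ii) The vector field log(x¹) ∂₂ is an affine Killing field for ∇ if and only if C₁₂¹ = 0, C₂₂¹ = 0, C₂₂² = 0 and 1 + C₁₁¹ − 2C₁₂² = 0. -/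
/-! For `X = f(x¹) ∂₂` the only surviving terms of the Killing equations are `f''` and the
products `Γ f'`, so they reduce to `C₁₂¹ f' = C₂₂¹ f' = C₂₂² f' = 0` and
`x f'' + (2 C₁₂² - C₁₁¹) f' = 0`. Both fields have `f' = c x^(a-1)` with `c ≠ 0`
(`c = a` for `x^a`; `c = 1`, `a = 0` for `log x`), and the last equation then reads
`c x^(a-2) (a - 1 - C₁₁¹ + 2 C₁₂²) = 0`. -/

noncomputable section

/-- Affine Killing vector field for a Type B connection:
`∂_i∂_j X^k + Σ_l (X^l ∂_l Γ_{ij}^k + Γ_{lj}^k ∂_i X^l + Γ_{il}^k ∂_j X^l − Γ_{ij}^l ∂_l X^k) = 0`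
on `M = (0,∞) × ℝ`. -/
def IsKillingB (C : Fin 2 → Fin 2 → Fin 2 → ℝ) (X : Fin 2 → ℝ × ℝ → ℝ) : Prop :=
  ∀ i j k : Fin 2, ∀ p : ℝ × ℝ, 0 < p.1 →
    pd i (pd j (X k)) p
      + ∑ l, (X l p * pd l (GammaB C i j k) p + GammaB C l j k p * pd i (X l) p
          + GammaB C i l k p * pd j (X l) p - GammaB C i j l p * pd l (X k) p) = 0

lemma differentiableAt_of_comp_fst {f : ℝ → ℝ} {p : ℝ × ℝ}
    (h : DifferentiableAt ℝ (fun q : ℝ × ℝ => f q.1) p) : DifferentiableAt ℝ f p.1 :=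
  h.comp (f := fun t : ℝ => (t, p.2)) p.1
    ((hasDerivAt_id p.1).prodMk (hasDerivAt_const p.1 p.2)).differentiableAt

lemma fderiv_comp_fst_apply (f : ℝ → ℝ) (p v : ℝ × ℝ) :
    fderiv ℝ (fun q : ℝ × ℝ => f q.1) p v = v.1 * deriv f p.1 := by
  by_cases hf : DifferentiableAt ℝ f p.1
  · change fderiv ℝ (f ∘ Prod.fst) p v = _
    rw [(hf.hasDerivAt.comp_hasFDerivAt p (hasFDerivAt_fst (𝕜 := ℝ) (p := p))).fderiv]
    simp [mul_comm]
  · rw [fderiv_zero_of_not_differentiableAt (mt differentiableAt_of_comp_fst hf),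
      deriv_zero_of_not_differentiableAt hf]
    simp

lemma pd_comp_fst_s10 (i : Fin 2) (f : ℝ → ℝ) :
    pd i (fun q => f q.1) = fun p => (ee i).1 * deriv f p.1 :=
  funext fun p => fderiv_comp_fst_apply f p (ee i)

lemma pd_const (i : Fin 2) (c : ℝ) : pd i (fun _ => c) = fun _ => 0 := by
  funext p
  simp [pd]

lemma pd_one_GammaB (C : Fin 2 → Fin 2 → Fin 2 → ℝ) (i j k : Fin 2) :
    pd 1 (GammaB C i j k) = fun _ => 0 := by
  unfold GammaB
  simpa [ee] using pd_comp_fst_s10 1 (fun x => C i j k / x)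

theorem isKillingB_vertical_iff (C : Fin 2 → Fin 2 → Fin 2 → ℝ)
    (hC : ∀ i j k, C i j k = C j i k) (f : ℝ → ℝ) :
    IsKillingB C ![fun _ => 0, fun p => f p.1] ↔
      ∀ x : ℝ, 0 < x →
        C 0 1 0 / x * deriv f x = 0 ∧ C 1 1 0 / x * deriv f x = 0 ∧
        C 1 1 1 / x * deriv f x = 0 ∧
        deriv (deriv f) x + (2 * C 0 1 1 - C 0 0 0) / x * deriv f x = 0 := by
  have h100 : C 1 0 0 = C 0 1 0 := hC 1 0 0
  have h101 : C 1 0 1 = C 0 1 1 := hC 1 0 1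
  constructor
  · intro h x hx
    have e000 := h 0 0 0 (x, 0) hx
    have e001 := h 0 0 1 (x, 0) hx
    have e010 := h 0 1 0 (x, 0) hx
    have e011 := h 0 1 1 (x, 0) hx
    simp only [Fin.sum_univ_two, Matrix.cons_val_zero, Matrix.cons_val_one, pd_comp_fst_s10,
      pd_const, pd_one_GammaB, GammaB, ee, h100, h101, mul_zero, zero_mul, one_mul, add_zero,
      zero_add, sub_zero] at e000 e001 e010 e011
    exact ⟨by linear_combination e000 / 2, e010, by linear_combination e011 + e000 / 2,
      by linear_combination e001⟩
  · intro h i j k p hp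
    obtain ⟨h010, h110, h111, h2⟩ := h p.1 hp
    fin_cases i <;> fin_cases j <;> fin_cases k <;>
      simp only [Fin.sum_univ_two, Matrix.cons_val_zero, Matrix.cons_val_one, pd_comp_fst_s10,
        pd_const, pd_one_GammaB, GammaB, ee, h100, h101, mul_zero, zero_mul, one_mul, add_zero,
        zero_add, sub_zero, Fin.zero_eta, Fin.mk_one]
    all_goals first | linarith | linear_combination h2

lemma deriv_deriv_of_deriv_eq_rpow {f : ℝ → ℝ} {c a : ℝ}
    (hf : deriv f = fun x => c * x ^ (a - 1)) (x : ℝ) :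
    deriv (deriv f) x = c * (a - 1) * x ^ (a - 2) := by
  rw [hf, deriv_const_mul_field']
  change c * deriv (fun x => x ^ (a - 1)) x = _
  rw [Real.deriv_rpow_const, sub_sub, one_add_one_eq_two, mul_assoc]

theorem isKillingB_vertical_iff_of_deriv_eq_rpow (C : Fin 2 → Fin 2 → Fin 2 → ℝ)
    (hC : ∀ i j k, C i j k = C j i k) {f : ℝ → ℝ} {c a : ℝ} (hc : c ≠ 0)
    (hf : deriv f = fun x => c * x ^ (a - 1)) :
    IsKillingB C ![fun _ => 0, fun p => f p.1] ↔
      C 0 1 0 = 0 ∧ C 1 1 0 = 0 ∧ C 1 1 1 = 0 ∧ a = 1 + C 0 0 0 - 2 * C 0 1 1 := by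
  rw [isKillingB_vertical_iff C hC f]
  constructor
  · intro h
    obtain ⟨h010, h110, h111, h2⟩ := h 1 one_pos
    rw [deriv_deriv_of_deriv_eq_rpow hf] at h2
    simp only [hf, Real.one_rpow, div_one, mul_one] at h010 h110 h111 h2
    have ha : c * (a - (1 + C 0 0 0 - 2 * C 0 1 1)) = 0 := by linear_combination h2
    exact ⟨(mul_eq_zero.mp h010).resolve_right hc, (mul_eq_zero.mp h110).resolve_right hc,
      (mul_eq_zero.mp h111).resolve_right hc,
      sub_eq_zero.mp ((mul_eq_zero.mp ha).resolve_left hc)⟩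
  · rintro ⟨h010, h110, h111, ha⟩ x hx
    have hpow : x ^ (a - 1) = x ^ (a - 2) * x := by
      rw [← Real.rpow_add_one hx.ne']
      ring_nf
    rw [deriv_deriv_of_deriv_eq_rpow hf]
    simp only [hf, h010, h110, h111, zero_div, zero_mul, true_and]
    rw [hpow, ha]
    field_simp
    ring

/-- characterization of when `(x¹)^a ∂₂` (for `a ≠ 0`) and `log(x¹) ∂₂` are
affine Killing fields of a Type B connection. -/
theorem stmt10 (C : Fin 2 → Fin 2 → Fin 2 → ℝ)
    (hC : ∀ i j k, C i j k = C j i k) :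
    (∀ a : ℝ, a ≠ 0 →
      (IsKillingB C ![fun _ => 0, fun p => p.1 ^ a] ↔
        (C 0 1 0 = 0 ∧ C 1 1 0 = 0 ∧ C 1 1 1 = 0 ∧ a = 1 + C 0 0 0 - 2 * C 0 1 1))) ∧
    (IsKillingB C ![fun _ => 0, fun p => Real.log p.1] ↔
      (C 0 1 0 = 0 ∧ C 1 1 0 = 0 ∧ C 1 1 1 = 0 ∧ 1 + C 0 0 0 - 2 * C 0 1 1 = 0)) := by
  refine ⟨fun a ha => isKillingB_vertical_iff_of_deriv_eq_rpow C hC ha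
    (funext (Real.deriv_rpow_const · a)), ?_⟩
  have hlog : deriv Real.log = fun x => 1 * x ^ ((0 : ℝ) - 1) := by
    funext x
    simp [Real.rpow_neg_one]
  rw [isKillingB_vertical_iff_of_deriv_eq_rpow C hC one_ne_zero hlog, eq_comm (a := (0 : ℝ))]
end
end
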